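/- The dual function J_ν, viewed as an extended-real-valued function of the coefficient family {Q_k}_{k∈Λ}, is lower semicontinuous on ℒ₊: for every Q̄ ∈ ℒ₊ and every sequence {Q_j}_{j≥1} ⊂ ℒ₊ whose coefficient families converge to those of Q̄, one has J_ν(Q̄) ≤ liminf_{j→∞} J_ν(Q_j). -/

import Mathlib

open Matrix MeasureTheory ComplexOrder ENNReal
noncomputable section

/-- The fundamental domain `(−π, π]^d` of the `d`-torus `𝕋^d`. -/
def torusSet (d : ℕ) : Set (Fin d → ℝ) :=
  Set.univ.pi fun _ => Set.Ioc (-Real.pi) Real.pi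

/-- The normalized Lebesgue measure `dμ(θ) = (2π)^{−d} dθ₁⋯dθ_d` on `𝕋^d = (−π, π]^d`. -/
def torusMeasure (d : ℕ) : Measure (Fin d → ℝ) :=
  (ENNReal.ofReal ((2 * Real.pi) ^ d))⁻¹ • volume.restrict (torusSet d)

/-- `e^{i⟨k,θ⟩}` where `⟨k,θ⟩ = Σ_j k_j θ_j`. -/
def eik {d : ℕ} (k : Fin d → ℤ) (θ : Fin d → ℝ) : ℂ :=
  Complex.exp (Complex.I * ∑ j, (k j : ℂ) * (θ j : ℂ))

/-- The matrix trigonometric polynomial `Q(e^{iθ}) = Σ_{k∈Λ} Q_k e^{−i⟨k,θ⟩}`. -/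
def trigPoly {d m : ℕ} (Λ : Finset (Fin d → ℤ))
    (Q : (Fin d → ℤ) → Matrix (Fin m) (Fin m) ℂ) (θ : Fin d → ℝ) :
    Matrix (Fin m) (Fin m) ℂ :=
  ∑ k ∈ Λ, eik (-k) θ • Q k

/-- A dual variable: a family `{Q_k}` with the Hermitian symmetry `Q_{−k} = Q_k^*`. -/
def IsDualVar {d m : ℕ} (Q : (Fin d → ℤ) → Matrix (Fin m) (Fin m) ℂ) : Prop :=
  ∀ k, Q (-k) = (Q k)ᴴ

/-- The index set `Λ` is finite (a `Finset`), contains `0`, and is symmetric. -/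
def IsIndexSet {d : ℕ} (Λ : Finset (Fin d → ℤ)) : Prop :=
  (0 : Fin d → ℤ) ∈ Λ ∧ ∀ k ∈ Λ, -k ∈ Λ

/-- Bounded and coercive prior: `a·I ≤ Ψ(e^{iθ}) ≤ b·I` for all `θ`, with `0 < a < b`. -/
def BoundedCoercive {d m : ℕ} (Ψ : (Fin d → ℝ) → Matrix (Fin m) (Fin m) ℂ) : Prop :=
  ∃ a b : ℝ, 0 < a ∧ a < b ∧
    ∀ θ, (Ψ θ - (a : ℂ) • 1).PosSemidef ∧ ((b : ℂ) • 1 - Ψ θ).PosSemidef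

/-- `z(θ) = (e^{iθ₁}, …, e^{iθ_d})`. -/
def zvec {d : ℕ} (θ : Fin d → ℝ) : Fin d → ℂ := fun j => Complex.exp (Complex.I * θ j)

/-- Each entry of `Ψ` is a rational function of `(e^{iθ₁}, …, e^{iθ_d})`: `Ψ = N_Ψ/d_Ψ`
with `N_Ψ` a matrix of polynomials and `d_Ψ` a scalar polynomial non-vanishing on the torus. -/
def RationalPrior {d m : ℕ} (Ψ : (Fin d → ℝ) → Matrix (Fin m) (Fin m) ℂ) : Prop :=
  ∃ (N : Matrix (Fin m) (Fin m) (MvPolynomial (Fin d) ℂ)) (dP : MvPolynomial (Fin d) ℂ),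
    ∀ θ : Fin d → ℝ, MvPolynomial.eval (zvec θ) dP ≠ 0 ∧
      Ψ θ = (MvPolynomial.eval (zvec θ) dP)⁻¹ • N.map (MvPolynomial.eval (zvec θ))

/-- The feasible set `ℒ₊`: dual variables `Q` with `νΨ(e^{iθ})⁻¹ + Q(e^{iθ})` positive
semidefinite for every `θ` and not identically zero. -/
def memFeasible {d m : ℕ} (ν : ℕ) (Λ : Finset (Fin d → ℤ))
    (Ψ : (Fin d → ℝ) → Matrix (Fin m) (Fin m) ℂ)
    (Q : (Fin d → ℤ) → Matrix (Fin m) (Fin m) ℂ) : Prop :=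
  IsDualVar Q ∧
  (∀ θ, ((ν : ℂ) • (Ψ θ)⁻¹ + trigPoly Λ Q θ).PosSemidef) ∧
  ¬ ∀ θ, (ν : ℂ) • (Ψ θ)⁻¹ + trigPoly Λ Q θ = 0

/-- `⟨Q, Σ⟩ := Σ_{k∈Λ} trace(Q_k Σ_k^*)` (a real number for dual variables). -/
def pairing {d m : ℕ} (Λ : Finset (Fin d → ℤ))
    (Q Sig : (Fin d → ℤ) → Matrix (Fin m) (Fin m) ℂ) : ℝ :=
  (∑ k ∈ Λ, Matrix.trace (Q k * (Sig k)ᴴ)).re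

/-- The dual function
`J_ν(Q) = ⟨Q,Σ⟩ + (ν/(ν−1)) ∫ trace{[Ψ⁻¹ (Ψ⁻¹ + Q/ν)⁻¹]^{ν−1}} dμ`, with values in
`ℝ ∪ {+∞}` (the integral is a Lebesgue integral of the a.e.-defined nonnegative integrand). -/
def Jnu {d m : ℕ} (ν : ℕ) (Λ : Finset (Fin d → ℤ))
    (Ψ : (Fin d → ℝ) → Matrix (Fin m) (Fin m) ℂ)
    (Sig Q : (Fin d → ℤ) → Matrix (Fin m) (Fin m) ℂ) : EReal :=
  ((pairing Λ Q Sig : ℝ) : EReal) +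
    ((((ν : ℝ≥0∞) / ((ν : ℝ≥0∞) - 1)) *
      ∫⁻ θ, ENNReal.ofReal
        (Matrix.trace (((Ψ θ)⁻¹ * ((Ψ θ)⁻¹ + ((ν : ℂ))⁻¹ • trigPoly Λ Q θ)⁻¹) ^ (ν - 1))).re
        ∂(torusMeasure d) : ℝ≥0∞) : EReal)

/-- The feasibility assumption, density form: `Φ₀` is an integrable Hermitian-matrix-valued
density, positive semidefinite a.e., positive definite on some nonempty open ball contained
in the torus, whose Fourier coefficients over `Λ` match the covariance data `Σ`. -/
def FeasibleData {d m : ℕ} (Λ : Finset (Fin d → ℤ))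
    (Sig : (Fin d → ℤ) → Matrix (Fin m) (Fin m) ℂ)
    (Φ₀ : (Fin d → ℝ) → Matrix (Fin m) (Fin m) ℂ) : Prop :=
  (∀ i j, Integrable (fun θ => Φ₀ θ i j) (torusMeasure d)) ∧
  (∀ᵐ θ ∂(torusMeasure d), (Φ₀ θ).PosSemidef) ∧
  (∃ (θc : Fin d → ℝ) (ε : ℝ), 0 < ε ∧ Metric.ball θc ε ⊆ torusSet d ∧
      ∀ θ ∈ Metric.ball θc ε, (Φ₀ θ).PosDef) ∧
  ∀ k ∈ Λ, ∀ i j, ∫ θ, eik k θ * Φ₀ θ i j ∂(torusMeasure d) = Sig k i j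

/-- Covariance data: Hermitian symmetry `Σ_{−k} = Σ_k^*`. -/
def IsCovData {d m : ℕ} (Sig : (Fin d → ℤ) → Matrix (Fin m) (Fin m) ℂ) : Prop :=
  ∀ k, Sig (-k) = (Sig k)ᴴ

end

/-!
`J_ν(Q)` is the pairing `⟨Q, Σ⟩`, which is continuous in the coefficients, plus a positive finite
multiple of `∫ F(Ψ, Q(e^{iθ})) dμ`. As a function of the two matrices, the integrand `F` is
continuous where the inverses in it exist and vanishes elsewhere, so it is lower semicontinuous;
`Q_j → Q̄` gives `Q_j(e^{iθ}) → Q̄(e^{iθ})` pointwise, and Fatou's lemma turns the pointwise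
inequality `F(Q̄) ≤ liminf F(Q_j)` into the one for the integrals.
-/

open Matrix MeasureTheory ComplexOrder ENNReal Filter
noncomputable section

open Topology

section DualIntegrand

variable {n : Type*} [Fintype n] [DecidableEq n]

/-- For `p ≠ 0`, Mathlib's junk inverse makes this vanish wherever either inverse fails to exist,
which makes it lower semicontinuous everywhere. -/
def dualIntegrand (c : ℂ) (p : ℕ) (x : Matrix n n ℂ × Matrix n n ℂ) : ℝ≥0∞ :=
  ENNReal.ofReal (trace ((x.1⁻¹ * (x.1⁻¹ + c • x.2)⁻¹) ^ p)).re

theorem ContinuousAt.matrix_inv {X : Type*} [TopologicalSpace X] {f : X → Matrix n n ℂ} {x : X}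
    (hf : ContinuousAt f x) (h : IsUnit (f x).det) : ContinuousAt (fun y => (f y)⁻¹) x := by
  refine (continuousAt_matrix_inv (f x) ?_).comp hf
  rw [Ring.inverse_eq_inv']
  exact continuousAt_inv₀ h.ne_zero

theorem lowerSemicontinuousAt_of_eq_zero {α : Type*} [TopologicalSpace α] {f : α → ℝ≥0∞}
    {x : α} (h : f x = 0) : LowerSemicontinuousAt f x := fun y hy =>
  absurd hy (by simp [h])

theorem lowerSemicontinuous_dualIntegrand (c : ℂ) {p : ℕ} (hp : p ≠ 0) :
    LowerSemicontinuous (dualIntegrand (n := n) c p) := by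
  intro x
  by_cases hP : IsUnit x.1.det
  · by_cases hB : IsUnit (x.1⁻¹ + c • x.2).det
    · have hPinv := continuousAt_fst.matrix_inv hP
      have hBinv := (hPinv.add (continuousAt_snd.const_smul c)).matrix_inv hB
      have hφ : Continuous fun y : Matrix n n ℂ × Matrix n n ℂ =>
          ENNReal.ofReal (trace ((y.1 * y.2) ^ p)).re :=
        ENNReal.continuous_ofReal.comp (by fun_prop)
      exact (hφ.continuousAt.comp (hPinv.prodMk hBinv)).lowerSemicontinuousAt
    · refine lowerSemicontinuousAt_of_eq_zero ?_
      simp [dualIntegrand, nonsing_inv_apply_not_isUnit _ hB, zero_pow hp]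
  · refine lowerSemicontinuousAt_of_eq_zero ?_
    simp [dualIntegrand, nonsing_inv_apply_not_isUnit _ hP, zero_pow hp]

end DualIntegrand

theorem continuous_eik {d : ℕ} (k : Fin d → ℤ) : Continuous (eik k) := by
  unfold eik
  fun_prop

theorem continuous_trigPoly {d m : ℕ} (Λ : Finset (Fin d → ℤ))
    (Q : (Fin d → ℤ) → Matrix (Fin m) (Fin m) ℂ) : Continuous (trigPoly Λ Q) :=
  continuous_finsetSum _ fun k _ => (continuous_eik (-k)).smul continuous_const

theorem continuous_zvec {d : ℕ} : Continuous (zvec (d := d)) := by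
  unfold zvec
  fun_prop

theorem RationalPrior.continuous {d m : ℕ} {Ψ : (Fin d → ℝ) → Matrix (Fin m) (Fin m) ℂ}
    (hΨ : RationalPrior Ψ) : Continuous Ψ := by
  obtain ⟨N, dP, hrat⟩ := hΨ
  have hden : Continuous fun θ => MvPolynomial.eval (zvec θ) dP :=
    MvPolynomial.continuous_eval dP |>.comp continuous_zvec
  rw [funext fun θ => (hrat θ).2]
  refine continuous_matrix fun i j => ?_
  simp only [Matrix.smul_apply, map_apply, smul_eq_mul]
  exact (hden.inv₀ fun θ => (hrat θ).1).mul
    ((MvPolynomial.continuous_eval (N i j)).comp continuous_zvec)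

theorem tendsto_trigPoly {ι : Type*} {l : Filter ι} {d m : ℕ} (Λ : Finset (Fin d → ℤ))
    {Qs : ι → (Fin d → ℤ) → Matrix (Fin m) (Fin m) ℂ} {Q : (Fin d → ℤ) → Matrix (Fin m) (Fin m) ℂ}
    (hQ : ∀ k ∈ Λ, Tendsto (fun j => Qs j k) l (𝓝 (Q k))) (θ : Fin d → ℝ) :
    Tendsto (fun j => trigPoly Λ (Qs j) θ) l (𝓝 (trigPoly Λ Q θ)) :=
  tendsto_finsetSum _ fun k hk => (hQ k hk).const_smul _

theorem tendsto_pairing {ι : Type*} {l : Filter ι} {d m : ℕ} (Λ : Finset (Fin d → ℤ))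
    {Qs : ι → (Fin d → ℤ) → Matrix (Fin m) (Fin m) ℂ} {Q : (Fin d → ℤ) → Matrix (Fin m) (Fin m) ℂ}
    (hQ : ∀ k ∈ Λ, Tendsto (fun j => Qs j k) l (𝓝 (Q k)))
    (Sig : (Fin d → ℤ) → Matrix (Fin m) (Fin m) ℂ) :
    Tendsto (fun j => pairing Λ (Qs j) Sig) l (𝓝 (pairing Λ Q Sig)) :=
  (Complex.continuous_re.tendsto _).comp <| tendsto_finsetSum _ fun k hk =>
    (continuous_id.matrix_trace.tendsto _).comp ((hQ k hk).mul_const _)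

theorem LowerSemicontinuousAt.le_liminf_comp {α β ι : Type*} [TopologicalSpace α]
    [CompleteLinearOrder β] {f : α → β} {x : α} (hf : LowerSemicontinuousAt f x)
    {u : ι → α} {l : Filter ι} (hu : Tendsto u l (𝓝 x)) : f x ≤ liminf (f ∘ u) l :=
  hf.le_liminf.trans hu.liminf_le_liminf_comp

theorem lintegral_dualIntegrand_le_liminf {α : Type*} [MeasurableSpace α] [TopologicalSpace α]
    [OpensMeasurableSpace α] (μ : Measure α) {n : Type*} [Fintype n] [DecidableEq n]
    (c : ℂ) {p : ℕ} (hp : p ≠ 0) {P : α → Matrix n n ℂ} (hP : Continuous P)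
    {T : ℕ → α → Matrix n n ℂ} (hT : ∀ j, Continuous (T j)) {T₀ : α → Matrix n n ℂ}
    (hT₀ : ∀ x, Tendsto (fun j => T j x) atTop (𝓝 (T₀ x))) :
    ∫⁻ x, dualIntegrand c p (P x, T₀ x) ∂μ ≤
      liminf (fun j => ∫⁻ x, dualIntegrand c p (P x, T j x) ∂μ) atTop := by
  have hlsc := lowerSemicontinuous_dualIntegrand (n := n) c hp
  calc ∫⁻ x, dualIntegrand c p (P x, T₀ x) ∂μ
      ≤ ∫⁻ x, liminf (fun j => dualIntegrand c p (P x, T j x)) atTop ∂μ :=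
        lintegral_mono fun x =>
          (hlsc.lowerSemicontinuousAt _).le_liminf_comp (tendsto_const_nhds.prodMk_nhds (hT₀ x))
    _ ≤ liminf (fun j => ∫⁻ x, dualIntegrand c p (P x, T j x) ∂μ) atTop :=
        lintegral_liminf_le fun j => (hlsc.comp (hP.prodMk (hT j))).measurable

theorem EReal.coe_add_coe_ennreal_le_liminf {ι : Type*} {l : Filter ι} [l.NeBot]
    {x : ι → ℝ} {x₀ : ℝ} (hx : Tendsto x l (𝓝 x₀)) {y : ι → ℝ≥0∞} {y₀ : ℝ≥0∞}
    (hy : y₀ ≤ liminf y l) :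
    (x₀ : EReal) + y₀ ≤ liminf (fun i => (x i : EReal) + y i) l := by
  have hy' : (y₀ : EReal) ≤ liminf (fun i => (y i : EReal)) l :=
    (EReal.coe_ennreal_le_coe_ennreal_iff.2 hy).trans_eq <|
      Monotone.map_liminf_of_continuousAt EReal.coe_ennreal_strictMono.monotone y
        continuous_coe_ennreal_ereal.continuousAt
  calc (x₀ : EReal) + y₀
      ≤ liminf (fun i => (x i : EReal)) l + liminf (fun i => (y i : EReal)) l :=
        add_le_add (EReal.tendsto_coe.2 hx).liminf_eq.ge hy'
    _ ≤ liminf (fun i => (x i : EReal) + y i) l := EReal.le_liminf_add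

theorem Jnu_eq_pairing_add_lintegral_dualIntegrand {d m : ℕ} (ν : ℕ) (Λ : Finset (Fin d → ℤ))
    (Ψ : (Fin d → ℝ) → Matrix (Fin m) (Fin m) ℂ) (Sig Q : (Fin d → ℤ) → Matrix (Fin m) (Fin m) ℂ) :
    Jnu ν Λ Ψ Sig Q = (pairing Λ Q Sig : EReal) +
      ((ν / (ν - 1) * ∫⁻ θ, dualIntegrand (ν : ℂ)⁻¹ (ν - 1) (Ψ θ, trigPoly Λ Q θ)
        ∂torusMeasure d : ℝ≥0∞) : EReal) :=
  rfl

theorem Jnu_lowerSemicontinuous_general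
    {d m : ℕ} (ν : ℕ) (hν : 2 ≤ ν)
    (Λ : Finset (Fin d → ℤ))
    (Ψ : (Fin d → ℝ) → Matrix (Fin m) (Fin m) ℂ)
    (hΨrat : RationalPrior Ψ)
    (Sig : (Fin d → ℤ) → Matrix (Fin m) (Fin m) ℂ)
    (Qbar : (Fin d → ℤ) → Matrix (Fin m) (Fin m) ℂ)
    (Qs : ℕ → (Fin d → ℤ) → Matrix (Fin m) (Fin m) ℂ)
    (hconv : ∀ k ∈ Λ, ∀ a b : Fin m,
      Tendsto (fun j => Qs j k a b) atTop (nhds (Qbar k a b))) :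
    Jnu ν Λ Ψ Sig Qbar ≤ liminf (fun j => Jnu ν Λ Ψ Sig (Qs j)) atTop := by
  have hQ : ∀ k ∈ Λ, Tendsto (fun j => Qs j k) atTop (𝓝 (Qbar k)) := fun k hk =>
    tendsto_pi_nhds.2 fun a => tendsto_pi_nhds.2 (hconv k hk a)
  have hI := lintegral_dualIntegrand_le_liminf (torusMeasure d) (ν : ℂ)⁻¹ (p := ν - 1) (by omega)
    hΨrat.continuous (fun j => continuous_trigPoly Λ (Qs j)) (tendsto_trigPoly Λ hQ)
  have hc : (ν : ℝ≥0∞) / (ν - 1) ≠ ⊤ :=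
    ENNReal.div_ne_top (by simp) (tsub_pos_of_lt (by exact_mod_cast hν)).ne'
  simp only [Jnu_eq_pairing_add_lintegral_dualIntegrand]
  refine EReal.coe_add_coe_ennreal_le_liminf (tendsto_pairing Λ hQ Sig) ?_
  rw [ENNReal.liminf_const_mul_of_ne_top hc]
  gcongr

/-- **Lower semicontinuity of the dual function `J_ν` on `ℒ₊`** (sequential form):
for every `Q̄ ∈ ℒ₊` and every sequence `{Q_j} ⊂ ℒ₊` whose coefficient families (indexed
by `Λ`) converge to those of `Q̄`, one has `J_ν(Q̄) ≤ liminf_j J_ν(Q_j)`. -/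
theorem Jnu_lowerSemicontinuous
    {d m : ℕ} (hd : 1 ≤ d) (hm : 1 ≤ m) (ν : ℕ) (hν : 2 ≤ ν)
    (Λ : Finset (Fin d → ℤ)) (hΛ : IsIndexSet Λ)
    (Ψ : (Fin d → ℝ) → Matrix (Fin m) (Fin m) ℂ)
    (hΨbc : BoundedCoercive Ψ) (hΨrat : RationalPrior Ψ)
    (Sig : (Fin d → ℤ) → Matrix (Fin m) (Fin m) ℂ) (hSig : IsCovData Sig)
    (Qbar : (Fin d → ℤ) → Matrix (Fin m) (Fin m) ℂ) (hQbar : memFeasible ν Λ Ψ Qbar)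
    (Qs : ℕ → (Fin d → ℤ) → Matrix (Fin m) (Fin m) ℂ)
    (hQs : ∀ j, memFeasible ν Λ Ψ (Qs j))
    (hconv : ∀ k ∈ Λ, ∀ a b : Fin m,
      Tendsto (fun j => Qs j k a b) atTop (nhds (Qbar k a b))) :
    Jnu ν Λ Ψ Sig Qbar ≤ liminf (fun j => Jnu ν Λ Ψ Sig (Qs j)) atTop :=
  Jnu_lowerSemicontinuous_general ν hν Λ Ψ hΨrat Sig Qbar Qs hconv

end
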